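/- arXiv:1406.0531 — 8 statements merged into one kernel-verified Lean document; each statement's English description precedes it below -/
import Mathlib

section
/- In the standard binary instrumental variable model, if W ⊥ Y | X (so ζ_{yx.w} = α_x^{[y=1]}(1-α_x)^{[y=0]} β_w^{[x=1]}(1-β_w)^{[x=0]} with α_x = P(Y=1|X=x), β_w = P(X=1|W=w)), then the Balke–Pearl bound width satisfies U_SIV − L_SIV = 1 − |β_1 − β_0|, where U_SIV = (1 − ζ_{01.1}) − ζ_{10.0} and L_SIV = ζ_{11.1} − (1 − ζ_{00.0}) under β_1 ≥ β_0 (and symmetrically otherwise). -/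
theorem stmt0_general (a0 a1 b0 b1 : ℝ) :
    (b0 ≤ b1 →
      ((1 - (1 - a1) * b1) - a0 * (1 - b0)) - (a1 * b1 - (1 - (1 - a0) * (1 - b0)))
        = 1 - |b1 - b0|) ∧
    (b1 ≤ b0 →
      ((1 - (1 - a1) * b0) - a0 * (1 - b1)) - (a1 * b0 - (1 - (1 - a0) * (1 - b1)))
        = 1 - |b1 - b0|) := by
  constructor
  · intro h
    rw [abs_of_nonneg (sub_nonneg.2 h)]
    ring
  · intro h
    rw [abs_of_nonpos (sub_nonpos.2 h)]
    ring

/-- Balke–Pearl bound width under `W ⊥ Y | X` in the standard binary IV model: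
`ζ_{yx.w} = α_x^{[y=1]}(1-α_x)^{[y=0]} β_w^{[x=1]}(1-β_w)^{[x=0]}`.
With `U_SIV = (1 - ζ_{01.1}) - ζ_{10.0}` and `L_SIV = ζ_{11.1} - (1 - ζ_{00.0})`
when `β₁ ≥ β₀` (and the `w`-swapped expressions otherwise),
the width is `U_SIV - L_SIV = 1 - |β₁ - β₀|`. -/
theorem stmt0 (a0 a1 b0 b1 : ℝ)
    (ha0 : a0 ∈ Set.Icc (0:ℝ) 1) (ha1 : a1 ∈ Set.Icc (0:ℝ) 1)
    (hb0 : b0 ∈ Set.Icc (0:ℝ) 1) (hb1 : b1 ∈ Set.Icc (0:ℝ) 1) :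
    (b0 ≤ b1 →
      ((1 - (1 - a1) * b1) - a0 * (1 - b0)) - (a1 * b1 - (1 - (1 - a0) * (1 - b0)))
        = 1 - |b1 - b0|) ∧
    (b1 ≤ b0 →
      ((1 - (1 - a1) * b0) - a0 * (1 - b1)) - (a1 * b0 - (1 - (1 - a0) * (1 - b1)))
        = 1 - |b1 - b0|) :=
  stmt0_general a0 a1 b0 b1
end

section
/- Under W ⊥ Y | X in the factorized IV model with β_1 ≥ β_0, the quantity 1 − ζ_{00.0} equals the minimum of the four Balke–Pearl upper-bound expressions for η_0: min{1 − ζ_{00.0}, 1 − ζ_{00.1}, ζ_{01.0}+ζ_{10.0}+ζ_{10.1}+ζ_{11.1}, ζ_{10.0}+ζ_{11.0}+ζ_{01.1}+ζ_{10.1}}. -/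
/-! Since `1 - ζ_{00.0} = b0 + a0 (1 - b0)`, each of the other three bounds exceeds it by a sum of
products of nonnegative factors, namely `(1 - a0) (b1 - b0)`, `a1 (b1 - b0) + a0 (1 - b1)` and
`(1 - a1) (b1 - b0) + a0 (1 - b1)`. -/

lemma min_min_min_eq_left {α : Type*} [LinearOrder α] {a b c d : α}
    (hb : a ≤ b) (hc : a ≤ c) (hd : a ≤ d) : min (min a b) (min c d) = a := by
  rw [min_eq_left hb, min_eq_left (le_min hc hd)]

theorem stmt1_general (a0 a1 b0 b1 : ℝ)
    (ha0 : a0 ∈ Set.Icc (0:ℝ) 1) (ha1 : a1 ∈ Set.Icc (0:ℝ) 1)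
    (hb1 : b1 ∈ Set.Icc (0:ℝ) 1)
    (hb : b0 ≤ b1) :
    1 - (1 - a0) * (1 - b0) =
      min (min (1 - (1 - a0) * (1 - b0)) (1 - (1 - a0) * (1 - b1)))
          (min ((1 - a1) * b0 + a0 * (1 - b0) + a0 * (1 - b1) + a1 * b1)
               (a0 * (1 - b0) + a1 * b0 + (1 - a1) * b1 + a0 * (1 - b1))) := by
  obtain ⟨ha0_nonneg, ha0_le_one⟩ := ha0
  obtain ⟨ha1_nonneg, ha1_le_one⟩ := ha1
  obtain ⟨-, hb1_le_one⟩ := hb1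
  have hgap : 0 ≤ b1 - b0 := sub_nonneg.2 hb
  have hslack : 0 ≤ a0 * (1 - b1) := mul_nonneg ha0_nonneg (sub_nonneg.2 hb1_le_one)
  refine (min_min_min_eq_left ?_ ?_ ?_).symm
  · linarith [mul_nonneg (sub_nonneg.2 ha0_le_one) hgap]
  · linarith [mul_nonneg ha1_nonneg hgap]
  · linarith [mul_nonneg (sub_nonneg.2 ha1_le_one) hgap]

/-- Under `W ⊥ Y | X` with `β₁ ≥ β₀`, the quantity `1 - ζ_{00.0}` equals the minimum of the
four Balke–Pearl upper-bound expressions for `η₀`. Here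
`ζ_{yx.w} = α_x^{[y=1]}(1-α_x)^{[y=0]} β_w^{[x=1]}(1-β_w)^{[x=0]}`. -/
theorem stmt1 (a0 a1 b0 b1 : ℝ)
    (ha0 : a0 ∈ Set.Icc (0:ℝ) 1) (ha1 : a1 ∈ Set.Icc (0:ℝ) 1)
    (hb0 : b0 ∈ Set.Icc (0:ℝ) 1) (hb1 : b1 ∈ Set.Icc (0:ℝ) 1)
    (hb : b0 ≤ b1) :
    1 - (1 - a0) * (1 - b0) =
      min (min (1 - (1 - a0) * (1 - b0)) (1 - (1 - a0) * (1 - b1)))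
          (min ((1 - a1) * b0 + a0 * (1 - b0) + a0 * (1 - b1) + a1 * b1)
               (a0 * (1 - b0) + a1 * b0 + (1 - a1) * b1 + a0 * (1 - b1))) :=
  stmt1_general a0 a1 b0 b1 ha0 ha1 hb1 hb
end

section
/- Let η⋆_w, η⋆_{w'}, δ⋆_{w'} : U → [0,1] be measurable with |η⋆_w(u) − η⋆_{w'}(u)| ≤ ε_w for all u, and δ⋆_{w'}(u) ≤ U_X with U_X > 0. Define ω_w = E[η⋆_w], κ1' = E[η⋆_{w'}δ⋆_{w'}], χ' = E[δ⋆_{w'}]. Then ω_w ≥ (κ1' − ε_w·χ') / U_X. -/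
/-!
Pointwise, `η⋆_{w'} δ - ε δ ≤ η⋆_w δ ≤ η⋆_w U_X`, since `δ ≥ 0`, `η⋆_w ≥ η⋆_{w'} - ε` and
`δ ≤ U_X`; integrating and dividing by `U_X > 0` gives the bound.
-/

open MeasureTheory

namespace MeasureTheory

variable {α : Type*} [MeasurableSpace α] {μ : Measure α}

lemma integrable_of_forall_mem_unitInterval [IsFiniteMeasure μ] {f : α → ℝ} (hf : Measurable f)
    (hf01 : ∀ x, f x ∈ unitInterval) : Integrable f μ :=
  Integrable.of_bound hf.aestronglyMeasurable 1 <| ae_of_all _ fun x ↦ by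
    rw [Real.norm_of_nonneg (hf01 x).1]
    exact (hf01 x).2

lemma integral_mul_sub_const_mul_le_integral_mul {f f' g : α → ℝ} {ε : ℝ}
    (hf'g : Integrable (fun x ↦ f' x * g x) μ) (hfg : Integrable (fun x ↦ f x * g x) μ)
    (hg : Integrable g μ) (hdist : ∀ x, |f x - f' x| ≤ ε) (hg0 : ∀ x, 0 ≤ g x) :
    (∫ x, f' x * g x ∂μ) - ε * ∫ x, g x ∂μ ≤ ∫ x, f x * g x ∂μ := by
  rw [← integral_const_mul, ← integral_sub hf'g (hg.const_mul ε)]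
  refine integral_mono (hf'g.sub (hg.const_mul ε)) hfg fun x ↦ ?_
  have hf'f : f' x - ε ≤ f x := by linarith [(abs_le.mp (hdist x)).1]
  calc f' x * g x - ε * g x = (f' x - ε) * g x := by ring
    _ ≤ f x * g x := mul_le_mul_of_nonneg_right hf'f (hg0 x)

lemma integral_mul_le_integral_mul_const {f g : α → ℝ} {C : ℝ}
    (hfg : Integrable (fun x ↦ f x * g x) μ) (hf : Integrable f μ)
    (hf0 : ∀ x, 0 ≤ f x) (hgC : ∀ x, g x ≤ C) :
    ∫ x, f x * g x ∂μ ≤ (∫ x, f x ∂μ) * C := by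
  rw [← integral_mul_const]
  exact integral_mono hfg (hf.mul_const C) fun x ↦ mul_le_mul_of_nonneg_left (hgC x) (hf0 x)

end MeasureTheory

/-- First cross-w bound of Theorem 2 of Silva–Evans: if `|η⋆_w - η⋆_{w'}| ≤ ε_w` pointwise
and `δ⋆_{w'} ≤ U_X` pointwise with `U_X > 0`, then with `ω_w = E[η⋆_w]`,
`κ₁' = E[η⋆_{w'}δ⋆_{w'}]`, `χ' = E[δ⋆_{w'}]`, one has `ω_w ≥ (κ₁' - ε_w·χ')/U_X`. -/
theorem stmt5 {U : Type*} [MeasurableSpace U] (P : Measure U) [IsProbabilityMeasure P]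
    (ηw ηw' δw' : U → ℝ) (hη1 : Measurable ηw) (hη2 : Measurable ηw') (hδ : Measurable δw')
    (hηw : ∀ u, ηw u ∈ Set.Icc (0:ℝ) 1) (hηw' : ∀ u, ηw' u ∈ Set.Icc (0:ℝ) 1)
    (hδw' : ∀ u, δw' u ∈ Set.Icc (0:ℝ) 1)
    (εw UX : ℝ) (hUX : 0 < UX)
    (hcross : ∀ u, |ηw u - ηw' u| ≤ εw)
    (hδU : ∀ u, δw' u ≤ UX) :
    ((∫ u, ηw' u * δw' u ∂P) - εw * ∫ u, δw' u ∂P) / UX ≤ ∫ u, ηw u ∂P := by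
  have iη : Integrable ηw P := integrable_of_forall_mem_unitInterval hη1 hηw
  have iδ : Integrable δw' P := integrable_of_forall_mem_unitInterval hδ hδw'
  have iηδ : Integrable (fun u ↦ ηw u * δw' u) P :=
    integrable_of_forall_mem_unitInterval (hη1.mul hδ) fun u ↦
      unitInterval.mul_mem (hηw u) (hδw' u)
  have iη'δ : Integrable (fun u ↦ ηw' u * δw' u) P :=
    integrable_of_forall_mem_unitInterval (hη2.mul hδ) fun u ↦
      unitInterval.mul_mem (hηw' u) (hδw' u)
  rw [div_le_iff₀ hUX]
  calc (∫ u, ηw' u * δw' u ∂P) - εw * ∫ u, δw' u ∂P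
      ≤ ∫ u, ηw u * δw' u ∂P :=
        integral_mul_sub_const_mul_le_integral_mul iη'δ iηδ iδ hcross fun u ↦ (hδw' u).1
    _ ≤ (∫ u, ηw u ∂P) * UX :=
        integral_mul_le_integral_mul_const iηδ iη (fun u ↦ (hηw u).1) hδU
end

section
/- Let η⋆_w, η⋆_{w'}, δ⋆_{w'} : U → [0,1] be measurable with |η⋆_w(u) − η⋆_{w'}(u)| ≤ ε_w pointwise and δ⋆_{w'}(u) ≤ U_X with U_X > 0. Define ω_w = E[η⋆_w], κ0' = E[(1−η⋆_{w'})δ⋆_{w'}], χ' = E[δ⋆_{w'}]. Then ω_w ≤ 1 − (κ0' − ε_w·χ') / U_X. -/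
open MeasureTheory

/-! Pointwise, `(1 - η') δ ≤ (1 - η) U_X + ε δ`: split the left side as
`(1 - η) δ + (η - η') δ`, bound `δ ≤ U_X` in the first term and `η - η' ≤ ε` in the second.
Integrating and dividing by `U_X > 0` gives the bound. -/

lemma integrable_of_forall_mem_Icc {α : Type*} [MeasurableSpace α] {μ : Measure α}
    [IsFiniteMeasure μ] {f : α → ℝ} {a b : ℝ} (hf : Measurable f) (hab : ∀ x, f x ∈ Set.Icc a b) :
    Integrable f μ :=
  .of_bound hf.aestronglyMeasurable (max |a| |b|) <| .of_forall fun x =>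
    abs_le_max_abs_abs (hab x).1 (hab x).2

lemma one_sub_mul_le_one_sub_mul_add_mul {η η' δ ε U : ℝ} (hη : η ≤ 1) (hδ : 0 ≤ δ)
    (hδU : δ ≤ U) (hcross : η - η' ≤ ε) :
    (1 - η') * δ ≤ (1 - η) * U + ε * δ := by
  nlinarith [mul_nonneg (sub_nonneg.2 hη) (sub_nonneg.2 hδU),
    mul_nonneg (sub_nonneg.2 hcross) hδ]

lemma integral_one_sub_mul_le {α : Type*} [MeasurableSpace α] {μ : Measure α}
    [IsProbabilityMeasure μ] {η η' δ : α → ℝ} {ε U : ℝ} (hηi : Integrable η μ)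
    (hδi : Integrable δ μ) (hη : ∀ x, η x ≤ 1) (hη' : ∀ x, η' x ≤ 1) (hδ : ∀ x, 0 ≤ δ x)
    (hδU : ∀ x, δ x ≤ U) (hcross : ∀ x, η x - η' x ≤ ε) :
    ∫ x, (1 - η' x) * δ x ∂μ ≤ (1 - ∫ x, η x ∂μ) * U + ε * ∫ x, δ x ∂μ := by
  have h1η : Integrable (fun x => 1 - η x) μ := (integrable_const 1).sub hηi
  calc ∫ x, (1 - η' x) * δ x ∂μ ≤ ∫ x, ((1 - η x) * U + ε * δ x) ∂μ :=
        integral_mono_of_nonneg (.of_forall fun x => mul_nonneg (sub_nonneg.2 (hη' x)) (hδ x))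
          ((h1η.mul_const U).add (hδi.const_mul ε)) (.of_forall fun x =>
            one_sub_mul_le_one_sub_mul_add_mul (hη x) (hδ x) (hδU x) (hcross x))
    _ = (1 - ∫ x, η x ∂μ) * U + ε * ∫ x, δ x ∂μ := by
        rw [integral_add (h1η.mul_const U) (hδi.const_mul ε),
          integral_mul_const, integral_const_mul, integral_sub (integrable_const 1) hηi,
          integral_const, probReal_univ, one_smul]

theorem stmt6_general {U : Type*} [MeasurableSpace U] (P : Measure U) [IsProbabilityMeasure P]
    (ηw ηw' δw' : U → ℝ) (hη1 : Measurable ηw) (hδ : Measurable δw')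
    (hηw : ∀ u, ηw u ∈ Set.Icc (0:ℝ) 1) (hηw' : ∀ u, ηw' u ∈ Set.Icc (0:ℝ) 1)
    (hδw' : ∀ u, δw' u ∈ Set.Icc (0:ℝ) 1)
    (εw UX : ℝ) (hUX : 0 < UX)
    (hcross : ∀ u, |ηw u - ηw' u| ≤ εw)
    (hδU : ∀ u, δw' u ≤ UX) :
    ∫ u, ηw u ∂P ≤ 1 - ((∫ u, (1 - ηw' u) * δw' u ∂P) - εw * ∫ u, δw' u ∂P) / UX := by
  have key := integral_one_sub_mul_le (μ := P) (integrable_of_forall_mem_Icc hη1 hηw)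
    (integrable_of_forall_mem_Icc hδ hδw') (fun u => (hηw u).2) (fun u => (hηw' u).2)
    (fun u => (hδw' u).1) hδU (fun u => (abs_le.1 (hcross u)).2)
  rw [le_sub_comm, div_le_iff₀ hUX]
  linarith

/-- Second cross-w upper bound of Theorem 2 of Silva–Evans: with `ω_w = E[η⋆_w]`,
`κ₀' = E[(1-η⋆_{w'})δ⋆_{w'}]`, `χ' = E[δ⋆_{w'}]`, if `|η⋆_w - η⋆_{w'}| ≤ ε_w` and
`δ⋆_{w'} ≤ U_X` pointwise (`U_X > 0`), then `ω_w ≤ 1 - (κ₀' - ε_w·χ')/U_X`. -/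
theorem stmt6 {U : Type*} [MeasurableSpace U] (P : Measure U) [IsProbabilityMeasure P]
    (ηw ηw' δw' : U → ℝ) (hη1 : Measurable ηw) (hη2 : Measurable ηw') (hδ : Measurable δw')
    (hηw : ∀ u, ηw u ∈ Set.Icc (0:ℝ) 1) (hηw' : ∀ u, ηw' u ∈ Set.Icc (0:ℝ) 1)
    (hδw' : ∀ u, δw' u ∈ Set.Icc (0:ℝ) 1)
    (εw UX : ℝ) (hUX : 0 < UX)
    (hcross : ∀ u, |ηw u - ηw' u| ≤ εw)
    (hδU : ∀ u, δw' u ≤ UX) :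
    ∫ u, ηw u ∂P ≤ 1 - ((∫ u, (1 - ηw' u) * δw' u ∂P) - εw * ∫ u, δw' u ∂P) / UX :=
  stmt6_general P ηw ηw' δw' hη1 hδ hηw hηw' hδw' εw UX hUX hcross hδU
end

section
/- Let η⋆_{xw}, η⋆_{xw'}, δ⋆_{x'w} : U → [0,1] be measurable with |η⋆_{xw}(u) − η⋆_{xw'}(u)| ≤ ε_w pointwise and δ⋆_{x'w}(u) ≤ U_X pointwise. Define ω_{xw} = E[η⋆_{xw}], ω_{xw'} = E[η⋆_{xw'}], κ1 = E[η⋆_{xw}(1−δ⋆_{x'w})], χ' = E[δ⋆_{x'w}]. Then ω_{xw} − ω_{xw'}·U_X ≤ κ1 + ε_w·χ'. -/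
/-!
Pointwise, `η δ ≤ (η' + ε) δ ≤ η' U_X + ε δ` because `0 ≤ δ ≤ U_X` and `0 ≤ η'`; adding `η (1 - δ)`
to both sides gives `η - η' U_X ≤ η (1 - δ) + ε δ`, and integrating this against `P` is the claim.
-/

open MeasureTheory

lemma sub_mul_le_mul_one_sub_add_mul {a b c d ε : ℝ} (hab : a - b ≤ ε) (hb : 0 ≤ b)
    (hd : 0 ≤ d) (hdc : d ≤ c) : a - b * c ≤ a * (1 - d) + ε * d := by
  nlinarith [mul_le_mul_of_nonneg_right hab hd, mul_le_mul_of_nonneg_left hdc hb]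

lemma Measurable.integrable_of_mem_unitInterval {α : Type*} [MeasurableSpace α] {μ : Measure α}
    [IsFiniteMeasure μ] {f : α → ℝ} (hf : Measurable f) (h : ∀ x, f x ∈ unitInterval) :
    Integrable f μ :=
  .of_bound hf.aestronglyMeasurable 1 <| .of_forall fun x => by
    rw [Real.norm_eq_abs, abs_le]
    exact ⟨by linarith [(h x).1], (h x).2⟩

/-- First coupled inequality in display (14) of Theorem 2 of Silva–Evans:
with `ω_{xw} = E[η⋆_{xw}]`, `ω_{xw'} = E[η⋆_{xw'}]`, `κ₁ = E[η⋆_{xw}(1-δ⋆_{x'w})]`,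
`χ' = E[δ⋆_{x'w}]`: `ω_{xw} - ω_{xw'}·U_X ≤ κ₁ + ε_w·χ'`. -/
theorem stmt7 {U : Type*} [MeasurableSpace U] (P : Measure U) [IsProbabilityMeasure P]
    (ηxw ηxw' δx'w : U → ℝ)
    (hη1 : Measurable ηxw) (hη2 : Measurable ηxw') (hδ : Measurable δx'w)
    (hηxw : ∀ u, ηxw u ∈ Set.Icc (0:ℝ) 1) (hηxw' : ∀ u, ηxw' u ∈ Set.Icc (0:ℝ) 1)
    (hδx'w : ∀ u, δx'w u ∈ Set.Icc (0:ℝ) 1)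
    (εw UX : ℝ)
    (hcross : ∀ u, |ηxw u - ηxw' u| ≤ εw)
    (hδU : ∀ u, δx'w u ≤ UX) :
    (∫ u, ηxw u ∂P) - (∫ u, ηxw' u ∂P) * UX ≤
      (∫ u, ηxw u * (1 - δx'w u) ∂P) + εw * ∫ u, δx'w u ∂P := by
  have iη : Integrable ηxw P := hη1.integrable_of_mem_unitInterval hηxw
  have iη' : Integrable ηxw' P := hη2.integrable_of_mem_unitInterval hηxw'
  have iδ : Integrable δx'w P := hδ.integrable_of_mem_unitInterval hδx'w
  have iκ : Integrable (fun u => ηxw u * (1 - δx'w u)) P :=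
    (hη1.mul (measurable_const.sub hδ)).integrable_of_mem_unitInterval fun u =>
      unitInterval.mul_mem (hηxw u) (Set.Icc.mem_iff_one_sub_mem.mp (hδx'w u))
  calc (∫ u, ηxw u ∂P) - (∫ u, ηxw' u ∂P) * UX
      = ∫ u, ηxw u - ηxw' u * UX ∂P := by
        rw [integral_sub iη (iη'.mul_const UX), integral_mul_const]
    _ ≤ ∫ u, ηxw u * (1 - δx'w u) + εw * δx'w u ∂P :=
        integral_mono (iη.sub (iη'.mul_const UX)) (iκ.add (iδ.const_mul εw)) fun u =>
          sub_mul_le_mul_one_sub_add_mul (abs_le.mp (hcross u)).2 (hηxw' u).1 (hδx'w u).1 (hδU u)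
    _ = (∫ u, ηxw u * (1 - δx'w u) ∂P) + εw * ∫ u, δx'w u ∂P := by
        rw [integral_add iκ (iδ.const_mul εw), integral_const_mul]
end

section
/- Suppose measurable functions η⋆_0, η⋆_1 and δ⋆_w, δ⋆_{w'} on a probability space take values in [L, U] ⊆ [0,1] and [0,1] respectively, and suppose the cross-w condition |η⋆_x at W=w minus η⋆_x at W=w'| ≤ ε_w holds pointwise for each x. Then, for x = 1, the Theorem-3-type inequality ω_{0w} − κ_{10.w} + ω_{1w} − κ_{11.w} − ω_{0w'} + κ_{10.w'} − κ_{11.w'} + χ_{w'}(U + L + 2ε_w) − L ≥ 0 holds, where ω_{xv} = E[η⋆_{xv}], κ_{1x.v} = E[ζ⋆_{1x.v}] with ζ⋆_{1x.v} = η⋆_{xv}·(δ⋆_v)^{[x=1]}(1−δ⋆_v)^{[x=0]}, and χ_v = E[δ⋆_v]. -/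
open MeasureTheory

/-- Theorem-3-type inequality (case x = 1) of Silva–Evans: with
`ω_{xv} = E[η⋆_{xv}]`, `κ_{10.v} = E[η⋆_{0v}(1-δ⋆_v)]`, `κ_{11.v} = E[η⋆_{1v}δ⋆_v]`,
`χ_v = E[δ⋆_v]`, and `L ≤ η⋆ ≤ U` pointwise with cross-w condition
`|η⋆_{xw} - η⋆_{xw'}| ≤ ε_w`:
`ω_{0w} - κ_{10.w} + ω_{1w} - κ_{11.w} - ω_{0w'} + κ_{10.w'} - κ_{11.w'}
  + χ_{w'}(U + L + 2ε_w) - L ≥ 0`. -/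
theorem stmt10 {U : Type*} [MeasurableSpace U] (P : Measure U) [IsProbabilityMeasure P]
    (η0w η1w η0w' η1w' δw δw' : U → ℝ)
    (hm0 : Measurable η0w) (hm1 : Measurable η1w)
    (hm0' : Measurable η0w') (hm1' : Measurable η1w')
    (hmd : Measurable δw) (hmd' : Measurable δw')
    (L Ub εw : ℝ) (hL : 0 ≤ L) (hLU : L ≤ Ub) (hU : Ub ≤ 1) (hε : 0 ≤ εw)
    (h0w : ∀ u, η0w u ∈ Set.Icc L Ub) (h1w : ∀ u, η1w u ∈ Set.Icc L Ub)
    (h0w' : ∀ u, η0w' u ∈ Set.Icc L Ub) (h1w' : ∀ u, η1w' u ∈ Set.Icc L Ub)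
    (hdw : ∀ u, δw u ∈ Set.Icc (0:ℝ) 1) (hdw' : ∀ u, δw' u ∈ Set.Icc (0:ℝ) 1)
    (hcross0 : ∀ u, |η0w u - η0w' u| ≤ εw) (hcross1 : ∀ u, |η1w u - η1w' u| ≤ εw) :
    0 ≤ (∫ u, η0w u ∂P) - (∫ u, η0w u * (1 - δw u) ∂P)
        + (∫ u, η1w u ∂P) - (∫ u, η1w u * δw u ∂P)
        - (∫ u, η0w' u ∂P) + (∫ u, η0w' u * (1 - δw' u) ∂P)
        - (∫ u, η1w' u * δw' u ∂P)
        + (∫ u, δw' u ∂P) * (Ub + L + 2 * εw) - L := by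
  have hbd : ∀ (f : U → ℝ) (C : ℝ), Measurable f → (∀ u, |f u| ≤ C) → Integrable f P := by
    intro f C hf hb
    exact (integrable_const C).mono' hf.aestronglyMeasurable (ae_of_all _ hb)
  have hη : ∀ (f : U → ℝ), (∀ u, f u ∈ Set.Icc L Ub) → ∀ u, 0 ≤ f u ∧ f u ≤ 1 := by
    intro f hf u
    exact ⟨le_trans hL (hf u).1, le_trans (hf u).2 hU⟩
  have hab : ∀ a b : ℝ, 0 ≤ a → a ≤ 1 → 0 ≤ b → b ≤ 1 → |a * b| ≤ 3 := by
    intro a b h1 h2 h3 h4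
    rw [abs_le]; constructor <;> nlinarith
  have i1 : Integrable η0w P := hbd _ 3 hm0 (fun u => by
    have := hη _ h0w u; rw [abs_le]; constructor <;> linarith [this.1, this.2])
  have i2 : Integrable (fun u => η0w u * (1 - δw u)) P := hbd _ 3 (hm0.mul (measurable_const.sub hmd)) (fun u => by
    have := hη _ h0w u; have hd := hdw u
    exact hab _ _ this.1 this.2 (by linarith [hd.2]) (by linarith [hd.1]))
  have i3 : Integrable η1w P := hbd _ 3 hm1 (fun u => by
    have := hη _ h1w u; rw [abs_le]; constructor <;> linarith [this.1, this.2])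
  have i4 : Integrable (fun u => η1w u * δw u) P := hbd _ 3 (hm1.mul hmd) (fun u => by
    have := hη _ h1w u; have hd := hdw u
    exact hab _ _ this.1 this.2 hd.1 hd.2)
  have i5 : Integrable η0w' P := hbd _ 3 hm0' (fun u => by
    have := hη _ h0w' u; rw [abs_le]; constructor <;> linarith [this.1, this.2])
  have i6 : Integrable (fun u => η0w' u * (1 - δw' u)) P := hbd _ 3 (hm0'.mul (measurable_const.sub hmd')) (fun u => by
    have := hη _ h0w' u; have hd := hdw' u
    exact hab _ _ this.1 this.2 (by linarith [hd.2]) (by linarith [hd.1]))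
  have i7 : Integrable (fun u => η1w' u * δw' u) P := hbd _ 3 (hm1'.mul hmd') (fun u => by
    have := hη _ h1w' u; have hd := hdw' u
    exact hab _ _ this.1 this.2 hd.1 hd.2)
  have i8 : Integrable (fun u => δw' u * (Ub + L + 2 * εw)) P := hbd _ (Ub + L + 2 * εw) (hmd'.mul measurable_const) (fun u => by
    have hd := hdw' u; rw [abs_le]; constructor <;> nlinarith [hd.1, hd.2])
  -- pointwise inequality
  have key : ∀ u, 0 ≤ η0w u - η0w u * (1 - δw u) + η1w u - η1w u * δw u - η0w' u
      + η0w' u * (1 - δw' u) - η1w' u * δw' u + δw' u * (Ub + L + 2 * εw) - L := by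
    intro u
    obtain ⟨ha0L, ha0U⟩ := h0w u
    obtain ⟨ha1L, ha1U⟩ := h1w u
    obtain ⟨ha0L', ha0U'⟩ := h0w' u
    obtain ⟨ha1L', ha1U'⟩ := h1w' u
    obtain ⟨hd0, hd1⟩ := hdw u
    obtain ⟨hd0', hd1'⟩ := hdw' u
    obtain ⟨hc0a, hc0b⟩ := abs_le.mp (hcross0 u)
    obtain ⟨hc1a, hc1b⟩ := abs_le.mp (hcross1 u)
    have F1 : 0 ≤ η0w u * δw u + η1w u * (1 - δw u) - L := by nlinarith
    have F2 : 0 ≤ η0w u * δw u + η1w u * (1 - δw u) - η0w' u - η1w' u + Ub + 2 * εw := by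
      nlinarith [mul_nonneg hd0 (sub_nonneg.2 ha0U), mul_nonneg (sub_nonneg.2 hd1) (sub_nonneg.2 ha1U)]
    nlinarith [mul_nonneg (sub_nonneg.2 hd1') F1, mul_nonneg hd0' F2]
  have hInt : Integrable (fun u => η0w u - η0w u * (1 - δw u) + η1w u - η1w u * δw u
      - η0w' u + η0w' u * (1 - δw' u) - η1w' u * δw' u + δw' u * (Ub + L + 2 * εw)) P :=
    ((((((i1.sub i2).add i3).sub i4).sub i5).add i6).sub i7).add i8
  have j2 : Integrable (fun u => η0w u - η0w u * (1 - δw u)) P := i1.sub i2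
  have j3 : Integrable (fun u => η0w u - η0w u * (1 - δw u) + η1w u) P := j2.add i3
  have j4 : Integrable (fun u => η0w u - η0w u * (1 - δw u) + η1w u - η1w u * δw u) P := j3.sub i4
  have j5 : Integrable (fun u => η0w u - η0w u * (1 - δw u) + η1w u - η1w u * δw u - η0w' u) P := j4.sub i5
  have j6 : Integrable (fun u => η0w u - η0w u * (1 - δw u) + η1w u - η1w u * δw u - η0w' u
      + η0w' u * (1 - δw' u)) P := j5.add i6
  have j7 : Integrable (fun u => η0w u - η0w u * (1 - δw u) + η1w u - η1w u * δw u - η0w' u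
      + η0w' u * (1 - δw' u) - η1w' u * δw' u) P := j6.sub i7
  have hEq : (∫ u, (η0w u - η0w u * (1 - δw u) + η1w u - η1w u * δw u
      - η0w' u + η0w' u * (1 - δw' u) - η1w' u * δw' u + δw' u * (Ub + L + 2 * εw) - L) ∂P)
      = (∫ u, η0w u ∂P) - (∫ u, η0w u * (1 - δw u) ∂P)
        + (∫ u, η1w u ∂P) - (∫ u, η1w u * δw u ∂P)
        - (∫ u, η0w' u ∂P) + (∫ u, η0w' u * (1 - δw' u) ∂P)
        - (∫ u, η1w' u * δw' u ∂P)
        + (∫ u, δw' u ∂P) * (Ub + L + 2 * εw) - L := by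
    rw [integral_sub hInt (integrable_const L),
      integral_add j7 i8, integral_sub j6 i7, integral_add j5 i6, integral_sub j4 i5,
      integral_sub j3 i4, integral_add j2 i3,
      integral_sub i1 i2, integral_mul_const, integral_const]
    simp
  rw [← hEq]
  exact integral_nonneg key
end

section
/- In the standard IV model (latent variable version), marginalizing the identity δ_0⋆(η_1⋆ − η_0⋆) + δ_1⋆(−η_1⋆ − η_0⋆ + 1) + η_0⋆ ≥ 0 over P(U), using the identities ζ_{1x.w}⋆ = η_{x}⋆ (δ_w⋆)^{[x=1]}(1−δ_w⋆)^{[x=0]} with η_{xw}⋆ = η_x⋆ (no direct W→Y effect), yields the observable constraint η_0 ≤ ζ_{11.0} + ζ_{10.0} + ζ_{10.1} + ζ_{01.1}, where η_0 = E[η_0⋆] and ζ_{yx.w} are the corresponding marginalized probabilities. -/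
open MeasureTheory

/-- Marginalizing the identity `δ₀⋆(η₁⋆ - η₀⋆) + δ₁⋆(-η₁⋆ - η₀⋆ + 1) + η₀⋆ ≥ 0`
over `P(U)` in the standard IV model, with `ζ_{11.0} = E[η₁⋆δ₀⋆]`,
`ζ_{10.0} = E[η₀⋆(1-δ₀⋆)]`, `ζ_{10.1} = E[η₀⋆(1-δ₁⋆)]`, `ζ_{01.1} = E[(1-η₁⋆)δ₁⋆]`,
yields `η₀ = E[η₀⋆] ≤ ζ_{11.0} + ζ_{10.0} + ζ_{10.1} + ζ_{01.1}`. -/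
theorem stmt13 {U : Type*} [MeasurableSpace U] (P : Measure U) [IsProbabilityMeasure P]
    (η0 η1 δ0 δ1 : U → ℝ)
    (hm0 : Measurable η0) (hm1 : Measurable η1)
    (hmd0 : Measurable δ0) (hmd1 : Measurable δ1)
    (hη0 : ∀ u, η0 u ∈ Set.Icc (0:ℝ) 1) (hη1 : ∀ u, η1 u ∈ Set.Icc (0:ℝ) 1)
    (hδ0 : ∀ u, δ0 u ∈ Set.Icc (0:ℝ) 1) (hδ1 : ∀ u, δ1 u ∈ Set.Icc (0:ℝ) 1)
    (hid : ∀ u, 0 ≤ δ0 u * (η1 u - η0 u) + δ1 u * (-η1 u - η0 u + 1) + η0 u) :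
    ∫ u, η0 u ∂P ≤ (∫ u, η1 u * δ0 u ∂P) + (∫ u, η0 u * (1 - δ0 u) ∂P)
      + (∫ u, η0 u * (1 - δ1 u) ∂P) + ∫ u, (1 - η1 u) * δ1 u ∂P := by
  have integrable {f : U → ℝ} (hf : Measurable f) (hf01 : ∀ u, f u ∈ Set.Icc (0:ℝ) 1) :
      Integrable f P :=
    .of_mem_Icc 0 1 hf.aemeasurable (.of_forall hf01)
  have one_sub_mem {f : U → ℝ} (hf01 : ∀ u, f u ∈ Set.Icc (0:ℝ) 1) u : 1 - f u ∈ Set.Icc (0:ℝ) 1 :=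
    Set.Icc.mem_iff_one_sub_mem.mp (hf01 u)
  have i0 := integrable hm0 hη0
  have i1 : Integrable (fun u ↦ η1 u * δ0 u) P :=
    integrable (hm1.mul hmd0) fun u ↦ unitInterval.mul_mem (hη1 u) (hδ0 u)
  have i2 : Integrable (fun u ↦ η0 u * (1 - δ0 u)) P :=
    integrable (hm0.mul (measurable_const.sub hmd0)) fun u ↦
      unitInterval.mul_mem (hη0 u) (one_sub_mem hδ0 u)
  have i3 : Integrable (fun u ↦ η0 u * (1 - δ1 u)) P :=
    integrable (hm0.mul (measurable_const.sub hmd1)) fun u ↦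
      unitInterval.mul_mem (hη0 u) (one_sub_mem hδ1 u)
  have i4 : Integrable (fun u ↦ (1 - η1 u) * δ1 u) P :=
    integrable ((measurable_const.sub hm1).mul hmd1) fun u ↦
      unitInterval.mul_mem (one_sub_mem hη1 u) (hδ1 u)
  -- Pointwise, the summed integrand exceeds `η0` by exactly the expression in `hid`.
  calc ∫ u, η0 u ∂P
      ≤ ∫ u, η1 u * δ0 u + η0 u * (1 - δ0 u) + η0 u * (1 - δ1 u) + (1 - η1 u) * δ1 u ∂P :=
        integral_mono i0 (((i1.add i2).add i3).add i4) fun u ↦ by linear_combination hid u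
    _ = _ := by
      rw [integral_add ?_ i4, integral_add ?_ i3, integral_add i1 i2]
      exacts [i1.add i2, (i1.add i2).add i3]
end

section
/- In the standard IV model with β_1 ≥ β_0 (where ζ_{yx.w} factorizes as α_x-type times β_w-type terms under W ⊥ Y | X), one has ζ_{11.1} = max{ζ_{11.1}, ζ_{11.0}, −ζ_{01.0}−ζ_{10.0}+ζ_{10.1}+ζ_{11.1}, ζ_{10.0}+ζ_{11.0}−ζ_{01.1}−ζ_{10.1}}, i.e., the Balke–Pearl lower bound on η_1 is attained by ζ_{11.1}. -/
/-! Each competitor of `ζ_{11.1} = α₁β₁` in the maximum is `α₁β₁` minus a nonnegative combination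
of `β₀` and `β₁ - β₀`:
`ζ_{11.0} = α₁β₁ - α₁(β₁ - β₀)`,
`-ζ_{01.0} - ζ_{10.0} + ζ_{10.1} + ζ_{11.1} = α₁β₁ - (1 - α₁)β₀ - α₀(β₁ - β₀)` and
`ζ_{10.0} + ζ_{11.0} - ζ_{01.1} - ζ_{10.1} = α₁β₁ - (1 - α₁)β₀ - (1 - α₀)(β₁ - β₀)`. -/

section BalkePearl

variable {R : Type*} [CommRing R] [LinearOrder R] [IsStrictOrderedRing R] {a0 a1 b0 b1 : R}

lemma balkePearl_third_le (ha0 : 0 ≤ a0) (ha1 : a1 ≤ 1) (hb0 : 0 ≤ b0) (hb : b0 ≤ b1) :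
    -(1 - a1) * b0 - a0 * (1 - b0) + a0 * (1 - b1) + a1 * b1 ≤ a1 * b1 := by
  have hdefect : 0 ≤ (1 - a1) * b0 + a0 * (b1 - b0) :=
    add_nonneg (mul_nonneg (sub_nonneg.2 ha1) hb0) (mul_nonneg ha0 (sub_nonneg.2 hb))
  linear_combination hdefect

lemma balkePearl_fourth_le (ha0 : a0 ≤ 1) (ha1 : a1 ≤ 1) (hb0 : 0 ≤ b0) (hb : b0 ≤ b1) :
    a0 * (1 - b0) + a1 * b0 - (1 - a1) * b1 - a0 * (1 - b1) ≤ a1 * b1 := by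
  have hdefect : 0 ≤ (1 - a1) * b0 + (1 - a0) * (b1 - b0) :=
    add_nonneg (mul_nonneg (sub_nonneg.2 ha1) hb0) (mul_nonneg (sub_nonneg.2 ha0) (sub_nonneg.2 hb))
  linear_combination hdefect

end BalkePearl

theorem stmt19_general (a0 a1 b0 b1 : ℝ)
    (ha0 : a0 ∈ Set.Icc (0:ℝ) 1) (ha1 : a1 ∈ Set.Icc (0:ℝ) 1)
    (hb0 : b0 ∈ Set.Icc (0:ℝ) 1)
    (hb : b0 ≤ b1) :
    a1 * b1 =
      max (max (a1 * b1) (a1 * b0))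
          (max (-(1 - a1) * b0 - a0 * (1 - b0) + a0 * (1 - b1) + a1 * b1)
               (a0 * (1 - b0) + a1 * b0 - (1 - a1) * b1 - a0 * (1 - b1))) := by
  rw [max_eq_left (mul_le_mul_of_nonneg_left hb ha1.1),
    max_eq_left (max_le (balkePearl_third_le ha0.1 ha1.2 hb0.1 hb)
      (balkePearl_fourth_le ha0.2 ha1.2 hb0.1 hb))]

/-- Under `W ⊥ Y | X` with `β₁ ≥ β₀`, the Balke–Pearl lower bound on `η₁` is attained by
`ζ_{11.1}`: `ζ_{11.1} = max{ζ_{11.1}, ζ_{11.0}, -ζ_{01.0}-ζ_{10.0}+ζ_{10.1}+ζ_{11.1},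
ζ_{10.0}+ζ_{11.0}-ζ_{01.1}-ζ_{10.1}}`, where
`ζ_{yx.w} = α_x^{[y=1]}(1-α_x)^{[y=0]} β_w^{[x=1]}(1-β_w)^{[x=0]}`. -/
theorem stmt19 (a0 a1 b0 b1 : ℝ)
    (ha0 : a0 ∈ Set.Icc (0:ℝ) 1) (ha1 : a1 ∈ Set.Icc (0:ℝ) 1)
    (hb0 : b0 ∈ Set.Icc (0:ℝ) 1) (hb1 : b1 ∈ Set.Icc (0:ℝ) 1)
    (hb : b0 ≤ b1) :
    a1 * b1 =
      max (max (a1 * b1) (a1 * b0))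
          (max (-(1 - a1) * b0 - a0 * (1 - b0) + a0 * (1 - b1) + a1 * b1)
               (a0 * (1 - b0) + a1 * b0 - (1 - a1) * b1 - a0 * (1 - b1))) :=
  stmt19_general a0 a1 b0 b1 ha0 ha1 hb0 hb
end
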